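/- arXiv:1307.0234 — 4 statements merged into one kernel-verified Lean document; each statement's English description precedes it below -/
import Mathlib

section
/- Let n ≥ 1 and M > 0. For every ε > 0 there exists δ = δ(n, ε, M) > 0 such that the following holds: for every ω ∈ ℝⁿ with |ω| ≤ M and every M-Lipschitz function u : B₁ → ℝ (B₁ the open unit ball of ℝⁿ) satisfying |{x ∈ B₁ : u is differentiable at x and |∇u(x) − ω| ≥ δ}| ≤ δ (Lebesgue measure), one has |u(x) − u(0) − ω·x| ≤ ε for every x ∈ B₁. -/
/-!
Put `v x = u x - ⟪ω, x⟫`: it is `(M + ‖ω‖)`-Lipschitz on `B₁`, and after a McShane extension to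
the whole space its derivative has norm `< δ` off the bad set `S` and is bounded by the Lipschitz
constant everywhere. For `w = (1 - θ) x`, the increment `v w - v 0` differs by `O(θ)` from the
average over `y ∈ B_θ` of `v (y + w) - v y`. Differentiating under the integral (Rademacher gives
the derivative almost everywhere), this average is the integral over `t ∈ [0, 1]` of the average of
`Dv (y + t w) w`, and since every translate of `S` has measure `|S|`, it is at most
`(δ + Lip(v) |S| / |B_θ|) ‖w‖`. Finally `|v x - v w| = O(θ)`.
-/

open MeasureTheory Metric Set Filter Bornology
open scoped NNReal ENNReal RealInnerProductSpace

theorem setIntegral_le_of_le_add_indicator {α : Type*} [MeasurableSpace α] {μ : Measure α}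
    {s S : Set α} {f : α → ℝ} {a b : ℝ} (hs : MeasurableSet s) (hμs : μ s ≠ ∞) (hμS : μ S ≠ ∞)
    (hf : 0 ≤ f) (hb : 0 ≤ b) (hfS : ∀ x ∈ s, f x ≤ a + S.indicator (fun _ => b) x) :
    ∫ x in s, f x ∂μ ≤ a * μ.real s + b * μ.real S := by
  -- `S` need not be measurable: its measurable hull has the same measure.
  set T := toMeasurable μ S
  have hT : MeasurableSet T := measurableSet_toMeasurable μ S
  have hμT : μ.real T = μ.real S := by simp [T, Measure.real, measure_toMeasurable]
  have hint : IntegrableOn (fun x => a + T.indicator (fun _ => b) x) s μ :=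
    (integrableOn_const hμs).add ((integrableOn_const hμs).indicator hT)
  calc ∫ x in s, f x ∂μ ≤ ∫ x in s, (a + T.indicator (fun _ => b) x) ∂μ := by
        refine integral_mono_of_nonneg (Eventually.of_forall hf) hint ?_
        filter_upwards [ae_restrict_mem hs] with x hx
        exact (hfS x hx).trans (add_le_add_right
          (indicator_le_indicator_of_subset (subset_toMeasurable μ S) (fun _ => hb) x) a)
    _ = a * μ.real s + b * μ.real (s ∩ T) := by
        rw [integral_add (integrableOn_const hμs (C := a))
            ((integrableOn_const hμs (C := b)).indicator hT),
          setIntegral_const, setIntegral_indicator hT, setIntegral_const]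
        simp [mul_comm]
    _ ≤ a * μ.real s + b * μ.real S := by
        rw [← hμT]
        gcongr
        · exact (measure_toMeasurable S).symm ▸ hμS
        · exact inter_subset_right

section AddHaar

variable {E : Type*} [NormedAddCommGroup E] [NormedSpace ℝ E] [FiniteDimensional ℝ E]
  [MeasurableSpace E] [BorelSpace E] {μ : Measure E} [μ.IsAddHaarMeasure]
  {C : ℝ≥0} {g : E → ℝ} {s : Set E}

theorem LipschitzWith.integrableOn_comp_add_const (hg : LipschitzWith C g) (hs : IsBounded s)
    (c : E) : IntegrableOn (fun y => g (y + c)) s μ :=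
  ((hg.continuous.comp (continuous_add_const c)).continuousOn.integrableOn_compact
    hs.isCompact_closure).mono_set subset_closure

theorem LipschitzWith.hasDerivAt_setIntegral_comp_add_smul (hg : LipschitzWith C g)
    (hs : IsBounded s) (w : E) (t₀ : ℝ) :
    HasDerivAt (fun t => ∫ y in s, g (y + t • w) ∂μ)
      (∫ y in s, fderiv ℝ g (y + t₀ • w) w ∂μ) t₀ := by
  have hμs : μ s ≠ ∞ := hs.measure_lt_top.ne
  have hint (t : ℝ) := hg.integrableOn_comp_add_const (μ := μ) hs (t • w)
  have hdiff : ∀ᵐ y ∂μ, DifferentiableAt ℝ g (y + t₀ • w) :=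
    (measurePreserving_add_right μ (t₀ • w)).quasiMeasurePreserving.ae hg.ae_differentiableAt
  have hlip (y : E) : LipschitzWith (Real.nnabs (C * ‖w‖)) (fun t : ℝ => g (y + t • w)) := by
    refine LipschitzWith.of_dist_le_mul fun t t' => ?_
    calc dist (g (y + t • w)) (g (y + t' • w)) ≤ C * dist (y + t • w) (y + t' • w) :=
          hg.dist_le_mul _ _
      _ = _ := by
        rw [dist_add_left, dist_eq_norm, ← sub_smul, norm_smul, Real.norm_eq_abs, Real.dist_eq]
        rw [Real.coe_nnabs, abs_of_nonneg (by positivity : (0 : ℝ) ≤ C * ‖w‖)]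
        ring
  refine (hasDerivAt_integral_of_dominated_loc_of_lip (bound := fun _ => C * ‖w‖) univ_mem
    (Eventually.of_forall fun t => (hint t).aestronglyMeasurable) (hint t₀)
    ((measurable_fderiv_apply_const ℝ g w).comp (measurable_add_const _)).aestronglyMeasurable
    (Eventually.of_forall fun y => ?_) (integrableOn_const hμs) ?_).2
  · exact (hlip y).lipschitzOnWith
  · filter_upwards [ae_restrict_of_ae hdiff] with y hy
    exact hy.hasFDerivAt.comp_hasDerivAt t₀
      (by simpa using ((hasDerivAt_id t₀).smul_const w).const_add y)

theorem LipschitzWith.abs_setIntegral_comp_add_sub_le (hg : LipschitzWith C g)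
    (hs : IsBounded s) {w : E} {K : ℝ}
    (hK : ∀ t ∈ Icc (0 : ℝ) 1, ∫ y in s, |fderiv ℝ g (y + t • w) w| ∂μ ≤ K) :
    |∫ y in s, g (y + w) ∂μ - ∫ y in s, g y ∂μ| ≤ K := by
  have := norm_image_sub_le_of_norm_deriv_le_segment'
    (fun t _ => (hg.hasDerivAt_setIntegral_comp_add_smul (μ := μ) hs w t).hasDerivWithinAt)
    (fun t ht => (norm_integral_le_integral_norm _).trans (hK t (Ico_subset_Icc_self ht)))
    1 (right_mem_Icc.2 zero_le_one)
  simpa using this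

theorem LipschitzWith.abs_setIntegral_comp_add_sub_le_of_norm_fderiv_le
    (hg : LipschitzWith C g) (hs : IsBounded s) (hs_meas : MeasurableSet s) {w : E} {S : Set E}
    (hS : μ S ≠ ∞) {δ : ℝ} (hδ : 0 ≤ δ)
    (hgood : ∀ y ∈ s, ∀ t ∈ Icc (0 : ℝ) 1, y + t • w ∉ S → ‖fderiv ℝ g (y + t • w)‖ ≤ δ) :
    |∫ y in s, g (y + w) ∂μ - ∫ y in s, g y ∂μ| ≤ (δ * μ.real s + C * μ.real S) * ‖w‖ := by
  refine hg.abs_setIntegral_comp_add_sub_le hs fun t ht => ?_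
  set S' := (· + t • w) ⁻¹' S
  have hpt : ∀ y ∈ s,
      |fderiv ℝ g (y + t • w) w| ≤ δ * ‖w‖ + S'.indicator (fun _ => C * ‖w‖) y := by
    intro y hy
    refine ((fderiv ℝ g (y + t • w)).le_opNorm w).trans ?_
    by_cases hyS : y ∈ S'
    · rw [indicator_of_mem hyS, ← add_mul]
      gcongr
      exact (norm_fderiv_le_of_lipschitz ℝ hg).trans (le_add_of_nonneg_left hδ)
    · rw [indicator_of_notMem hyS, add_zero]
      gcongr
      exact hgood y hy t ht hyS
  have hS' : μ S' = μ S := measure_preimage_add_right μ _ S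
  have hS'_real : μ.real S' = μ.real S := by rw [measureReal_def, hS', ← measureReal_def]
  calc ∫ y in s, |fderiv ℝ g (y + t • w) w| ∂μ
      ≤ δ * ‖w‖ * μ.real s + C * ‖w‖ * μ.real S' :=
        setIntegral_le_of_le_add_indicator hs_meas hs.measure_lt_top.ne (hS' ▸ hS)
          (fun _ => abs_nonneg _) (by positivity) hpt
    _ = (δ * μ.real s + C * μ.real S) * ‖w‖ := by
        rw [hS'_real]; ring

theorem LipschitzWith.abs_setIntegral_comp_add_sub_measureReal_mul_le (hg : LipschitzWith C g)
    (hs : IsBounded s) {r : ℝ} (hsr : s ⊆ closedBall 0 r) (c : E) :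
    |∫ y in s, g (y + c) ∂μ - μ.real s * g c| ≤ C * r * μ.real s := by
  rw [← smul_eq_mul, ← setIntegral_const, ← integral_sub (hg.integrableOn_comp_add_const hs c)
    (integrableOn_const hs.measure_lt_top.ne), ← Real.norm_eq_abs]
  refine norm_setIntegral_le_of_norm_le_const hs.measure_lt_top fun y hy => ?_
  calc ‖g (y + c) - g c‖ ≤ C * ‖y + c - c‖ := hg.norm_sub_le _ _
    _ ≤ C * r := by
      rw [add_sub_cancel_right]
      gcongr
      exact mem_closedBall_zero_iff.1 (hsr hy)

theorem LipschitzWith.abs_sub_le_of_norm_fderiv_le_off (hg : LipschitzWith C g) {r δ : ℝ}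
    (hr : 0 < r) (hδ : 0 ≤ δ) {w : E} {S : Set E} (hS : μ S ≠ ∞)
    (hgood : ∀ y ∈ ball (0 : E) r, ∀ t ∈ Icc (0 : ℝ) 1,
      y + t • w ∉ S → ‖fderiv ℝ g (y + t • w)‖ ≤ δ) :
    |g w - g 0| ≤ (δ + C * μ.real S / μ.real (ball (0 : E) r)) * ‖w‖ + 2 * C * r := by
  set V := μ.real (ball (0 : E) r)
  have hV : 0 < V := ENNReal.toReal_pos (measure_ball_pos μ 0 hr).ne' measure_ball_lt_top.ne
  have h_diff := hg.abs_setIntegral_comp_add_sub_le_of_norm_fderiv_le isBounded_ball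
    measurableSet_ball hS hδ hgood
  have h_w := hg.abs_setIntegral_comp_add_sub_measureReal_mul_le (μ := μ) isBounded_ball
    (ball_subset_closedBall (x := (0 : E)) (ε := r)) w
  have h_0 := hg.abs_setIntegral_comp_add_sub_measureReal_mul_le (μ := μ) isBounded_ball
    (ball_subset_closedBall (x := (0 : E)) (ε := r)) 0
  simp only [add_zero] at h_0
  have h_avg : |g w - g 0| * V ≤ (δ * V + C * μ.real S) * ‖w‖ + 2 * C * r * V := by
    rw [mul_comm, ← abs_of_pos hV, ← abs_mul, abs_of_pos hV, mul_sub]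
    rw [abs_le] at h_diff h_w h_0 ⊢
    constructor <;> linarith [h_diff.1, h_diff.2, h_w.1, h_w.2, h_0.1, h_0.2]
  calc |g w - g 0| = |g w - g 0| * V / V := by field_simp
    _ ≤ ((δ * V + C * μ.real S) * ‖w‖ + 2 * C * r * V) / V := by gcongr
    _ = (δ + C * μ.real S / V) * ‖w‖ + 2 * C * r := by field_simp

end AddHaar

section InnerProductSpace

variable {F : Type*} [NormedAddCommGroup F] [InnerProductSpace ℝ F]

theorem LipschitzOnWith.sub_inner {u : F → ℝ} {U : Set F} {K : ℝ≥0} (hu : LipschitzOnWith K u U)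
    (ω : F) : LipschitzOnWith (K + ‖ω‖₊) (fun x => u x - ⟪ω, x⟫) U := by
  have h : ‖innerSL ℝ ω‖₊ = ‖ω‖₊ := Subtype.ext (innerSL_apply_norm ℝ ω)
  exact hu.sub (h ▸ (innerSL ℝ ω).lipschitz.lipschitzOnWith)

variable [CompleteSpace F]

theorem norm_fderiv_sub_inner {u : F → ℝ} {z : F} (hu : DifferentiableAt ℝ u z) (ω : F) :
    ‖fderiv ℝ (fun x => u x - ⟪ω, x⟫) z‖ = ‖gradient u z - ω‖ := by
  rw [show (fun x => u x - ⟪ω, x⟫) = fun x => u x - innerSL ℝ ω x from rfl,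
    fderiv_fun_sub hu (innerSL ℝ ω).differentiableAt, (innerSL ℝ ω).fderiv, gradient,
    ← (InnerProductSpace.toDual ℝ F).norm_map, map_sub, LinearIsometryEquiv.apply_symm_apply]
  rfl

theorem norm_fderiv_le_of_eqOn_sub_inner {u g : F → ℝ} {ω : F} {U : Set F} (hU : IsOpen U)
    (hgu : EqOn (fun x => u x - ⟪ω, x⟫) g U) {z : F} (hz : z ∈ U) {δ : ℝ} (hδ : 0 ≤ δ)
    (hz_good : ¬(DifferentiableAt ℝ u z ∧ δ ≤ ‖gradient u z - ω‖)) : ‖fderiv ℝ g z‖ ≤ δ := by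
  rw [← (hgu.eventuallyEq_of_mem (hU.mem_nhds hz)).fderiv_eq]
  by_cases hd : DifferentiableAt ℝ u z
  · rw [norm_fderiv_sub_inner hd]
    exact (not_le.1 fun h => hz_good ⟨hd, h⟩).le
  · have hv : ¬DifferentiableAt ℝ (fun x => u x - ⟪ω, x⟫) z := fun hv =>
      hd (by simpa using hv.fun_add (innerSL ℝ ω).differentiableAt)
    rwa [fderiv_zero_of_not_differentiableAt hv, norm_zero]

variable [FiniteDimensional ℝ F] [MeasurableSpace F] [BorelSpace F] {μ : Measure F}
  [μ.IsAddHaarMeasure]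

theorem abs_sub_sub_inner_le_of_lipschitzOnWith {u : F → ℝ} {K : ℝ≥0}
    (hu : LipschitzOnWith K u (ball 0 1)) (ω : F) {θ δ : ℝ} (hθ : 0 < θ) (hθ1 : θ ≤ 1)
    (hδ : 0 ≤ δ)
    (hS : μ {x ∈ ball 0 1 | DifferentiableAt ℝ u x ∧ δ ≤ ‖gradient u x - ω‖} ≠ ∞)
    {x : F} (hx : x ∈ ball 0 1) :
    |u x - u 0 - ⟪ω, x⟫| ≤
      δ + (K + ‖ω‖) * μ.real {x ∈ ball 0 1 | DifferentiableAt ℝ u x ∧ δ ≤ ‖gradient u x - ω‖} /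
        μ.real (ball (0 : F) θ) + 3 * (K + ‖ω‖) * θ := by
  set S := {x ∈ ball (0 : F) 1 | DifferentiableAt ℝ u x ∧ δ ≤ ‖gradient u x - ω‖}
  obtain ⟨g, hg, hgu⟩ := (hu.sub_inner ω).extend_real
  set w := (1 - θ) • x
  have hw : ‖w‖ ≤ 1 - θ := by
    rw [norm_smul, Real.norm_of_nonneg (sub_nonneg.2 hθ1)]
    exact mul_le_of_le_one_right (sub_nonneg.2 hθ1) (mem_ball_zero_iff.1 hx).le
  have hseg : ∀ y ∈ ball 0 θ, ∀ t ∈ Icc (0 : ℝ) 1, y + t • w ∈ ball 0 1 := by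
    intro y hy t ht
    rw [mem_ball_zero_iff] at hy ⊢
    calc ‖y + t • w‖ ≤ ‖y‖ + t * ‖w‖ :=
          (norm_add_le _ _).trans_eq (by rw [norm_smul, Real.norm_of_nonneg ht.1])
      _ < θ + 1 * (1 - θ) := add_lt_add_of_lt_of_le hy
          (mul_le_mul ht.2 hw (norm_nonneg _) zero_le_one)
      _ = 1 := by ring
  have h_w0 := hg.abs_sub_le_of_norm_fderiv_le_off hθ hδ hS fun y hy t ht hyt =>
    norm_fderiv_le_of_eqOn_sub_inner isOpen_ball hgu (hseg y hy t ht) hδ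
      fun h => hyt ⟨hseg y hy t ht, h⟩
  have h_xw : |g x - g w| ≤ (K + ‖ω‖) * θ := by
    have hxw : x - w = θ • x := by simp only [w, sub_smul, one_smul, sub_sub_cancel]
    calc |g x - g w| ≤ (K + ‖ω‖) * ‖x - w‖ := by simpa using hg.norm_sub_le x w
      _ ≤ (K + ‖ω‖) * (θ * 1) := by
        rw [hxw, norm_smul, Real.norm_of_nonneg hθ.le]
        gcongr
        exact (mem_ball_zero_iff.1 hx).le
      _ = (K + ‖ω‖) * θ := by ring
  have hux : u x - u 0 - ⟪ω, x⟫ = g x - g 0 := by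
    rw [← hgu hx, ← hgu (mem_ball_self one_pos)]
    simp only [inner_zero_right, sub_zero]
    ring
  push_cast at h_w0
  rw [hux]
  calc |g x - g 0| ≤ |g x - g w| + |g w - g 0| := abs_sub_le _ _ _
    _ ≤ (K + ‖ω‖) * θ +
        ((δ + (K + ‖ω‖) * μ.real S / μ.real (ball (0 : F) θ)) * 1 + 2 * (K + ‖ω‖) * θ) := by
      gcongr
      refine h_w0.trans ?_
      gcongr
      linarith
    _ = _ := by ring

end InnerProductSpace

theorem almost_affine_of_almost_constant_gradient_general
    (n : ℕ) (M : ℝ) (hM : 0 < M) (ε : ℝ) (hε : 0 < ε) :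
    ∃ δ : ℝ, 0 < δ ∧
      ∀ ω : EuclideanSpace ℝ (Fin n), ‖ω‖ ≤ M →
      ∀ u : EuclideanSpace ℝ (Fin n) → ℝ,
        (∀ x ∈ Metric.ball (0 : EuclideanSpace ℝ (Fin n)) 1,
          ∀ y ∈ Metric.ball (0 : EuclideanSpace ℝ (Fin n)) 1,
            |u x - u y| ≤ M * ‖x - y‖) →
        volume {x ∈ Metric.ball (0 : EuclideanSpace ℝ (Fin n)) 1 |
            DifferentiableAt ℝ u x ∧ δ ≤ ‖gradient u x - ω‖} ≤ ENNReal.ofReal δ →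
        ∀ x ∈ Metric.ball (0 : EuclideanSpace ℝ (Fin n)) 1,
          |u x - u 0 - (inner ℝ ω x : ℝ)| ≤ ε := by
  set θ := min 1 (ε / (12 * M))
  have hθ : 0 < θ := lt_min one_pos (by positivity)
  have hθε : 6 * M * θ ≤ ε / 2 := by
    have := min_le_right 1 (ε / (12 * M))
    rw [le_div_iff₀ (by positivity)] at this
    linarith
  set V := volume.real (ball (0 : EuclideanSpace ℝ (Fin n)) θ)
  have hV : 0 < V := ENNReal.toReal_pos (measure_ball_pos _ 0 hθ).ne' measure_ball_lt_top.ne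
  set δ := ε / 2 / (1 + 2 * M / V)
  have hδ : 0 < δ := by positivity
  refine ⟨δ, hδ, fun ω hω u hu hbad x hx => ?_⟩
  have hu' : LipschitzOnWith M.toNNReal u (ball 0 1) :=
    LipschitzOnWith.of_dist_le_mul fun x hx y hy => by
      simpa [Real.dist_eq, dist_eq_norm, Real.coe_toNNReal M hM.le] using hu x hx y hy
  have hC : (M.toNNReal + ‖ω‖ : ℝ) ≤ 2 * M := by
    rw [Real.coe_toNNReal _ hM.le]
    linarith
  calc |u x - u 0 - ⟪ω, x⟫|
      ≤ _ := abs_sub_sub_inner_le_of_lipschitzOnWith hu' ω hθ (min_le_left _ _) hδ.le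
        (hbad.trans_lt ENNReal.ofReal_lt_top).ne hx
    _ ≤ δ + 2 * M * δ / V + 3 * (2 * M) * θ := by
      gcongr
      exact ENNReal.toReal_le_of_le_ofReal hδ.le hbad
    _ = δ * (1 + 2 * M / V) + 6 * M * θ := by ring
    _ ≤ ε := by
      rw [div_mul_cancel₀ _ (by positivity)]
      linarith

/-- **Lipschitz functions with almost-constant gradient are almost affine.**
Let `n ≥ 1` and `M > 0`. For every `ε > 0` there is `δ = δ(n,ε,M) > 0` such that: for every
`ω ∈ ℝⁿ` with `|ω| ≤ M` and every `M`-Lipschitz function `u` on the open unit ball `B₁ ⊆ ℝⁿ`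
with `|{x ∈ B₁ : u differentiable at x and |∇u(x) - ω| ≥ δ}| ≤ δ`, one has
`|u(x) - u(0) - ω·x| ≤ ε` for every `x ∈ B₁`. -/
theorem almost_affine_of_almost_constant_gradient
    (n : ℕ) (hn : 1 ≤ n) (M : ℝ) (hM : 0 < M) (ε : ℝ) (hε : 0 < ε) :
    ∃ δ : ℝ, 0 < δ ∧
      ∀ ω : EuclideanSpace ℝ (Fin n), ‖ω‖ ≤ M →
      ∀ u : EuclideanSpace ℝ (Fin n) → ℝ,
        (∀ x ∈ Metric.ball (0 : EuclideanSpace ℝ (Fin n)) 1,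
          ∀ y ∈ Metric.ball (0 : EuclideanSpace ℝ (Fin n)) 1,
            |u x - u y| ≤ M * ‖x - y‖) →
        volume {x ∈ Metric.ball (0 : EuclideanSpace ℝ (Fin n)) 1 |
            DifferentiableAt ℝ u x ∧ δ ≤ ‖gradient u x - ω‖} ≤ ENNReal.ofReal δ →
        ∀ x ∈ Metric.ball (0 : EuclideanSpace ℝ (Fin n)) 1,
          |u x - u 0 - (inner ℝ ω x : ℝ)| ≤ ε :=
  almost_affine_of_almost_constant_gradient_general n M hM ε hε
end

section
/- Let n ≥ 1 and M > 0. For every ε > 0 there exists μ = μ(n, ε, M) ∈ (0, M) such that the following holds: for every σ ∈ ∂B₁ (a unit vector in ℝⁿ) and every M-Lipschitz function u : B₁ → ℝ for which there exists a sequence t_k ↘ 0 with |{x ∈ B₁ : x + t_k σ ∈ B₁ and u(x + t_k σ) − u(x) ≥ (M − μ) t_k}| ≥ (1 − μ)|B₁| for every k, one has |u(x) − u(0) − M σ·x| ≤ ε for every x ∈ B₁. -/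
/-!
For a `K`-Lipschitz `u` and a unit vector `σ`, the defect `K t - (u (x + t σ) - u x)` of one step
lies in `[0, 2 K t]`, and the measure hypothesis makes it at most `μ t` off a set of measure
`μ |B₁|`; so its integral over `B₁` is `O(μ t)`. Summing the defects of the `m ≈ L / t` consecutive
steps and averaging over a small ball `B(c, η)`, one finds, next to every `c`, a chain of length
`Λ = m t ≈ L` along which `u` grows by almost the maximal amount `K Λ`. If `p` lies next to the
start of such a chain, the chain's endpoint is within `(Λ - σ·(q - p)) + O(|q - p|² / L)` of `q`,
and the Lipschitz bound gives `u q - u p ≥ K σ·(q - p) - error`; exchanging `p` and `q` gives the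
reverse inequality. Telescoping over `N` short steps from `0` to a slight contraction of `x` then
shows that `u - K σ·x` is almost constant. Extending `u` to a globally `K`-Lipschitz function
(McShane) first makes every set in sight measurable.
-/

open MeasureTheory Metric Set Filter Topology Module
open scoped NNReal ENNReal RealInnerProductSpace

variable {E : Type*} [NormedAddCommGroup E] [InnerProductSpace ℝ E]

lemma norm_sub_smul_le_of_le_sub_inner {σ v : E} (hσ : ‖σ‖ = 1) {Λ d : ℝ} (hd : 0 < d)
    (hdΛ : d ≤ Λ - ⟪σ, v⟫) : ‖v - Λ • σ‖ ≤ (Λ - ⟪σ, v⟫) + ‖v‖ ^ 2 / (2 * d) := by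
  have hsq : ‖v - Λ • σ‖ ^ 2 ≤ (Λ - ⟪σ, v⟫) ^ 2 + ‖v‖ ^ 2 := by
    rw [norm_sub_sq_real, real_inner_smul_right, norm_smul, hσ, real_inner_comm,
      Real.norm_eq_abs, mul_one, sq_abs]
    nlinarith [sq_nonneg ⟪σ, v⟫]
  have hcross : ‖v‖ ^ 2 ≤ 2 * (Λ - ⟪σ, v⟫) * (‖v‖ ^ 2 / (2 * d)) := by
    rw [← mul_div_assoc, le_div_iff₀ (by positivity)]
    nlinarith [mul_nonneg (sq_nonneg ‖v‖) (sub_nonneg.2 hdΛ)]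
  refine (sq_le_sq₀ (norm_nonneg _) (add_nonneg (by linarith) (by positivity))).mp ?_
  nlinarith [sq_nonneg (‖v‖ ^ 2 / (2 * d))]

def AlmostMaxGrowthNear (u : E → ℝ) (K : ℝ) (σ : E) (Λ κ η : ℝ) (c : E) : Prop :=
  ∃ y, ‖y - c‖ < η ∧ K * Λ - κ ≤ u (y + Λ • σ) - u y

variable {K : ℝ≥0} {u : E → ℝ} {σ : E}

lemma AlmostMaxGrowthNear.mul_inner_sub_le (hu : LipschitzWith K u) (hσ : ‖σ‖ = 1) {p q : E}
    {Λ κ η d : ℝ} (hp : AlmostMaxGrowthNear u K σ Λ κ η p) (hd : 0 < d)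
    (hdΛ : d ≤ Λ - ⟪σ, q - p⟫) :
    K * ⟪σ, q - p⟫ - (κ + 2 * K * η + K * ‖q - p‖ ^ 2 / (2 * d)) ≤ u q - u p := by
  obtain ⟨y, hy, hgrowth⟩ := hp
  have hend : ‖q - (y + Λ • σ)‖ ≤ (Λ - ⟪σ, q - p⟫) + ‖q - p‖ ^ 2 / (2 * d) + η :=
    calc ‖q - (y + Λ • σ)‖ = ‖(q - p - Λ • σ) - (y - p)‖ := by congr 1; abel
      _ ≤ ‖q - p - Λ • σ‖ + ‖y - p‖ := norm_sub_le _ _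
      _ ≤ _ := add_le_add (norm_sub_smul_le_of_le_sub_inner hσ hd hdΛ) hy.le
  have h1 := hu.norm_sub_le q (y + Λ • σ)
  have h2 := hu.norm_sub_le y p
  rw [Real.norm_eq_abs, abs_le] at h1 h2
  have h3 := mul_le_mul_of_nonneg_left hend K.coe_nonneg
  have h4 := mul_le_mul_of_nonneg_left hy.le K.coe_nonneg
  rw [mul_add, mul_add, mul_sub, ← mul_div_assoc] at h3
  linarith [h1.1, h2.1]

lemma abs_sub_sub_inner_le_of_almostMaxGrowthNear (hu : LipschitzWith K u) (hσ : ‖σ‖ = 1)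
    {p q : E} {Λ κ η d : ℝ} (hp : AlmostMaxGrowthNear u K σ Λ κ η p)
    (hq : AlmostMaxGrowthNear u K σ Λ κ η q) (hd : 0 < d) (hdΛ : d ≤ Λ - |⟪σ, q - p⟫|) :
    |u q - u p - K * ⟪σ, q - p⟫| ≤ κ + 2 * K * η + K * ‖q - p‖ ^ 2 / (2 * d) := by
  have hinner : ⟪σ, p - q⟫ = -⟪σ, q - p⟫ := by rw [← inner_neg_right, neg_sub]
  have hpq := hp.mul_inner_sub_le hu hσ hd (hdΛ.trans (by linarith [le_abs_self ⟪σ, q - p⟫]))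
  have hqp := hq.mul_inner_sub_le hu hσ (q := p) hd (by
    rw [hinner]; linarith [neg_abs_le ⟪σ, q - p⟫])
  rw [hinner, norm_sub_rev] at hqp
  rw [abs_le]
  constructor <;> linarith

lemma abs_sub_sub_inner_sub_le (hu : LipschitzWith K u) (hσ : ‖σ‖ = 1) (x y : E) :
    |(u x - K * ⟪σ, x⟫) - (u y - K * ⟪σ, y⟫)| ≤ 2 * K * ‖x - y‖ := by
  have h1 := hu.norm_sub_le x y
  have h2 := mul_le_mul_of_nonneg_left
    ((abs_real_inner_le_norm σ (x - y)).trans_eq (by rw [hσ, one_mul])) K.coe_nonneg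
  rw [Real.norm_eq_abs] at h1
  calc |(u x - K * ⟪σ, x⟫) - (u y - K * ⟪σ, y⟫)| = |(u x - u y) - K * ⟪σ, x - y⟫| := by
        rw [inner_sub_right]; ring_nf
    _ ≤ |u x - u y| + K * |⟪σ, x - y⟫| :=
        (abs_sub _ _).trans_eq (by rw [abs_mul, abs_of_nonneg K.coe_nonneg])
    _ ≤ 2 * K * ‖x - y‖ := by linarith

lemma abs_sub_le_of_forall_abs_sub_le {f : E → ℝ} {r δ a b : ℝ}
    (hf : ∀ p q : E, ‖p‖ ≤ r → ‖q‖ ≤ r → ‖q - p‖ ≤ δ → |f q - f p| ≤ a + b * ‖q - p‖ ^ 2)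
    {x : E} (hx : ‖x‖ ≤ r) {N : ℕ} (hN : 0 < N) (hxN : ‖x‖ ≤ N * δ) :
    |f x - f 0| ≤ N * a + b * ‖x‖ ^ 2 / N := by
  have hN' : (0 : ℝ) < N := Nat.cast_pos.2 hN
  set P : ℕ → E := fun j => ((j : ℝ) / N) • x
  have hP : ∀ j ≤ N, ‖P j‖ ≤ r := fun j hj => by
    have : (j : ℝ) / N ≤ 1 := div_le_one_of_le₀ (Nat.cast_le.2 hj) hN'.le
    calc ‖P j‖ = (j : ℝ) / N * ‖x‖ := by rw [norm_smul, Real.norm_of_nonneg (by positivity)]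
      _ ≤ ‖x‖ := mul_le_of_le_one_left (norm_nonneg x) this
      _ ≤ r := hx
  have hstep : ∀ j, ‖P (j + 1) - P j‖ = ‖x‖ / N := fun j => by
    rw [← sub_smul, Nat.cast_succ, ← sub_div, add_sub_cancel_left, norm_smul,
      Real.norm_of_nonneg (by positivity), one_div_mul_eq_div]
  have hsum := dist_le_range_sum_of_dist_le (f := fun j => f (P j)) N
    (d := fun _ => a + b * (‖x‖ / N) ^ 2) fun {k} hk => by
      rw [Real.dist_eq, abs_sub_comm, ← hstep k]
      exact hf _ _ (hP k hk.le) (hP (k + 1) hk) (by rw [hstep, div_le_iff₀' hN']; exact hxN)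
  have hP0 : P 0 = 0 := by simp [P]
  have hPN : P N = x := by simp [P, hN'.ne']
  rw [Real.dist_eq, abs_sub_comm, hP0, hPN, Finset.sum_const, Finset.card_range,
    nsmul_eq_mul] at hsum
  calc |f x - f 0| ≤ N * (a + b * (‖x‖ / N) ^ 2) := hsum
    _ = N * a + b * ‖x‖ ^ 2 / N := by field_simp

lemma abs_sub_sub_inner_le_of_forall_almostMaxGrowthNear (hu : LipschitzWith K u)
    (hσ : ‖σ‖ = 1) {L Λ κ η : ℝ} (hL : 0 < L) (hLΛ : L ≤ Λ) (hLη : 2 * L + 2 * η ≤ 1)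
    (hgrowth : ∀ c : E, ‖c‖ + η + 2 * L < 1 → AlmostMaxGrowthNear u K σ Λ κ η c)
    (hη : 0 < η) {N : ℕ} (hN : 4 ≤ N * L) {x : E} (hx : ‖x‖ ≤ 1) :
    |u x - u 0 - K * ⟪σ, x⟫| ≤ N * (κ + 2 * K * η) + K / (N * L) + 2 * K * (2 * L + 2 * η) := by
  set r := 1 - 2 * L - 2 * η
  set f : E → ℝ := fun z => u z - K * ⟪σ, z⟫
  have hpair : ∀ p q : E, ‖p‖ ≤ r → ‖q‖ ≤ r → ‖q - p‖ ≤ L / 4 →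
      |f q - f p| ≤ (κ + 2 * K * η) + K / L * ‖q - p‖ ^ 2 := by
    intro p q hp hq hpq
    have hα : |⟪σ, q - p⟫| ≤ L / 4 :=
      (abs_real_inner_le_norm σ _).trans (by rw [hσ, one_mul]; exact hpq)
    have h := abs_sub_sub_inner_le_of_almostMaxGrowthNear hu hσ (hgrowth p (by linarith))
      (hgrowth q (by linarith)) (d := L / 2) (by positivity) (by linarith)
    calc |f q - f p| = |u q - u p - K * ⟪σ, q - p⟫| := by
          simp only [f, inner_sub_right]; ring_nf
      _ ≤ _ := h
      _ = _ := by field_simp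
  have hN0 : 0 < N := Nat.pos_of_ne_zero fun h => by simp [h] at hN; linarith
  have hrx : ‖r • x‖ ≤ r := by
    rw [norm_smul, Real.norm_of_nonneg (by linarith)]
    exact mul_le_of_le_one_right (by linarith) hx
  have hseg := abs_sub_le_of_forall_abs_sub_le hpair hrx hN0 (by linarith)
  have hxr : ‖x - r • x‖ ≤ 2 * L + 2 * η := by
    rw [show x - r • x = (2 * L + 2 * η) • x by simp only [r]; module, norm_smul,
      Real.norm_of_nonneg (by linarith)]
    exact mul_le_of_le_one_right (by linarith) hx
  have hshrink : |f x - f (r • x)| ≤ 2 * K * (2 * L + 2 * η) :=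
    (abs_sub_sub_inner_sub_le hu hσ x (r • x)).trans (by gcongr)
  have hquad : K / L * ‖r • x‖ ^ 2 / N ≤ K / (N * L) := by
    calc K / L * ‖r • x‖ ^ 2 / N = K / (N * L) * ‖r • x‖ ^ 2 := by ring
      _ ≤ K / (N * L) := mul_le_of_le_one_right (by positivity)
        (pow_le_one₀ (norm_nonneg _) (hrx.trans (by linarith)))
  calc |u x - u 0 - K * ⟪σ, x⟫| = |(f x - f (r • x)) + (f (r • x) - f 0)| := by
        simp only [f, inner_zero_right, mul_zero, sub_zero]; ring_nf
    _ ≤ |f x - f (r • x)| + |f (r • x) - f 0| := abs_add_le _ _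
    _ ≤ _ := by linarith

lemma measure_sdiff_le_ofReal_mul {α : Type*} [MeasurableSpace α] {ν : Measure α}
    {s t : Set α} (hst : s ⊆ t) (hs : NullMeasurableSet s ν) (hs' : ν s ≠ ∞) {μ : ℝ}
    (h : ENNReal.ofReal (1 - μ) * ν t ≤ ν s) : ν (t \ s) ≤ ENNReal.ofReal μ * ν t := by
  rw [measure_sdiff_le_iff_le_add hs hst hs']
  calc ν t ≤ (ENNReal.ofReal (1 - μ) + ENNReal.ofReal μ) * ν t := by
        refine le_mul_of_one_le_left' ?_
        simpa using ENNReal.ofReal_add_le (p := 1 - μ) (q := μ)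
    _ = ENNReal.ofReal (1 - μ) * ν t + ENNReal.ofReal μ * ν t := add_mul _ _ _
    _ ≤ ν s + ENNReal.ofReal μ * ν t := by gcongr

lemma exists_mem_sum_comp_add_lt {G : Type*} [AddGroup G] [MeasurableSpace G]
    [MeasurableAdd G] {ν : Measure G} [ν.IsAddRightInvariant] {H : G → ℝ≥0∞}
    (hH : AEMeasurable H ν) (v : ℕ → G) (m : ℕ) {S : Set G} {c : ℝ≥0∞}
    (h : m * ∫⁻ x, H x ∂ν < c * ν S) : ∃ y ∈ S, ∑ j ∈ Finset.range m, H (y + v j) < c := by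
  have htrans : ∀ j, AEMeasurable (fun y => H (y + v j)) ν := fun j =>
    hH.comp_quasiMeasurePreserving (measurePreserving_add_right ν (v j)).quasiMeasurePreserving
  by_contra! hS
  have hMarkov := (mul_le_mul_right (measure_mono hS) c).trans
    (mul_meas_ge_le_lintegral₀ (Finset.aemeasurable_fun_sum _ fun j _ => htrans j) c)
  rw [lintegral_finsetSum' _ fun j _ => htrans j] at hMarkov
  simp only [lintegral_add_right_eq_self, Finset.sum_const, Finset.card_range,
    nsmul_eq_mul] at hMarkov
  exact (hMarkov.trans_lt h).false

def growthDefect (u : E → ℝ) (K : ℝ) (σ : E) (t : ℝ) (x : E) : ℝ :=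
  K * t - (u (x + t • σ) - u x)

lemma LipschitzWith.abs_add_smul_sub_le (hu : LipschitzWith K u) (hσ : ‖σ‖ = 1) {t : ℝ} (ht : 0 ≤ t)
    (x : E) : |u (x + t • σ) - u x| ≤ K * t := by
  simpa [Real.norm_eq_abs, norm_smul, hσ, abs_of_nonneg ht] using hu.norm_sub_le (x + t • σ) x

lemma growthDefect_nonneg (hu : LipschitzWith K u) (hσ : ‖σ‖ = 1) {t : ℝ} (ht : 0 ≤ t) (x : E) :
    0 ≤ growthDefect u K σ t x := by
  unfold growthDefect
  linarith [(abs_le.mp (hu.abs_add_smul_sub_le hσ ht x)).2]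

lemma growthDefect_le (hu : LipschitzWith K u) (hσ : ‖σ‖ = 1) {t : ℝ} (ht : 0 ≤ t) (x : E) :
    growthDefect u K σ t x ≤ 2 * K * t := by
  unfold growthDefect
  linarith [(abs_le.mp (hu.abs_add_smul_sub_le hσ ht x)).1]

lemma sum_range_growthDefect (u : E → ℝ) (K : ℝ) (σ : E) (t : ℝ) (y : E) (m : ℕ) :
    ∑ j ∈ Finset.range m, growthDefect u K σ t (y + ((j : ℝ) * t) • σ) =
      K * (m * t) - (u (y + ((m : ℝ) * t) • σ) - u y) := by
  induction m with
  | zero => simp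
  | succ m ih =>
    rw [Finset.sum_range_succ, ih, growthDefect, add_assoc, ← add_smul]
    push_cast
    ring_nf

lemma continuous_growthDefect (hu : LipschitzWith K u) (t : ℝ) :
    Continuous (growthDefect u K σ t) :=
  continuous_const.sub ((hu.continuous.comp (continuous_add_const _)).sub hu.continuous)

section Measure

variable [MeasurableSpace E] [BorelSpace E] {ν : Measure E}

lemma setLIntegral_growthDefect_le (hu : LipschitzWith K u) (hσ : ‖σ‖ = 1) {t μ : ℝ}
    (ht : 0 ≤ t) (hμ : 0 ≤ μ) {s : Set E} (hs : MeasurableSet s) (hs' : ν s ≠ ∞)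
    (hgood : ENNReal.ofReal (1 - μ) * ν s ≤
      ν {x ∈ s | x + t • σ ∈ s ∧ (K - μ) * t ≤ u (x + t • σ) - u x}) :
    ∫⁻ x in s, ENNReal.ofReal (growthDefect u K σ t x) ∂ν ≤
      ENNReal.ofReal ((1 + 2 * K) * μ * t) * ν s := by
  set A := {x ∈ s | x + t • σ ∈ s ∧ (K - μ) * t ≤ u (x + t • σ) - u x}
  have hAs : A ⊆ s := sep_subset _ _
  have hA : MeasurableSet A := hs.inter ((hs.preimage (measurable_add_const _)).inter
    (measurableSet_le measurable_const
      ((hu.continuous.comp (continuous_add_const _)).sub hu.continuous).measurable))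
  have hbad : ν (s \ A) ≤ ENNReal.ofReal μ * ν s := measure_sdiff_le_ofReal_mul hAs
    hA.nullMeasurableSet ((measure_mono hAs).trans_lt hs'.lt_top).ne hgood
  have hpt : ∀ x ∈ s, ENNReal.ofReal (growthDefect u K σ t x) ≤
      ENNReal.ofReal (μ * t) + (s \ A).indicator (fun _ => ENNReal.ofReal (2 * K * t)) x := by
    intro x hx
    by_cases hxA : x ∈ A
    · refine le_add_right (ENNReal.ofReal_le_ofReal ?_)
      have := hxA.2.2
      unfold growthDefect
      linarith
    · rw [indicator_of_mem (show x ∈ s \ A from ⟨hx, hxA⟩)]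
      exact le_add_left (ENNReal.ofReal_le_ofReal (growthDefect_le hu hσ ht x))
  calc ∫⁻ x in s, ENNReal.ofReal (growthDefect u K σ t x) ∂ν
      ≤ ∫⁻ x in s, (ENNReal.ofReal (μ * t) +
          (s \ A).indicator (fun _ => ENNReal.ofReal (2 * K * t)) x) ∂ν :=
        setLIntegral_mono' hs hpt
    _ ≤ ENNReal.ofReal (μ * t) * ν s + ENNReal.ofReal (2 * K * t) * ν (s \ A) := by
        rw [lintegral_add_left measurable_const,
          setLIntegral_const]
        gcongr
        exact (lintegral_indicator_const_le _ _).trans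
          (mul_le_mul_right (Measure.restrict_le_self _) _)
    _ ≤ ENNReal.ofReal (μ * t) * ν s + ENNReal.ofReal (2 * K * t) * (ENNReal.ofReal μ * ν s) := by
        gcongr
    _ = ENNReal.ofReal ((1 + 2 * K) * μ * t) * ν s := by
        rw [← mul_assoc, ← ENNReal.ofReal_mul (by positivity), ← add_mul,
          ← ENNReal.ofReal_add (by positivity) (by positivity)]
        ring_nf

variable [FiniteDimensional ℝ E] [ν.IsAddHaarMeasure]

lemma natCast_mul_setLIntegral_growthDefect_lt (hu : LipschitzWith K u) (hσ : ‖σ‖ = 1)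
    {t μ : ℝ} (ht : 0 ≤ t) (hμ : 0 ≤ μ)
    (hgood : ENNReal.ofReal (1 - μ) * ν (ball 0 1) ≤ ν {x ∈ ball (0 : E) 1 |
      x + t • σ ∈ ball 0 1 ∧ (K - μ) * t ≤ u (x + t • σ) - u x})
    {m : ℕ} {κ η : ℝ} (hη : 0 < η) (hsmall : m * t * ((1 + 2 * K) * μ) < κ * η ^ finrank ℝ E)
    (c : E) :
    (m : ℝ≥0∞) * ∫⁻ x in ball 0 1, ENNReal.ofReal (growthDefect u K σ t x) ∂ν <
      ENNReal.ofReal κ * ν (ball c η) := by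
  have hκη : 0 < κ * η ^ finrank ℝ E := lt_of_le_of_lt (by positivity) hsmall
  have hκ : 0 < κ := (mul_pos_iff_of_pos_right (pow_pos hη _)).mp hκη
  calc (m : ℝ≥0∞) * ∫⁻ x in ball 0 1, ENNReal.ofReal (growthDefect u K σ t x) ∂ν
      ≤ m * (ENNReal.ofReal ((1 + 2 * K) * μ * t) * ν (ball 0 1)) := by
        gcongr
        exact setLIntegral_growthDefect_le hu hσ ht hμ measurableSet_ball
          measure_ball_lt_top.ne hgood
    _ = ENNReal.ofReal (m * t * ((1 + 2 * K) * μ)) * ν (ball 0 1) := by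
        rw [← ENNReal.ofReal_natCast, ← mul_assoc, ← ENNReal.ofReal_mul (by positivity)]
        ring_nf
    _ < ENNReal.ofReal (κ * η ^ finrank ℝ E) * ν (ball 0 1) :=
        ENNReal.mul_lt_mul_left (measure_ball_pos ν _ one_pos).ne' measure_ball_lt_top.ne
          ((ENNReal.ofReal_lt_ofReal_iff hκη).mpr hsmall)
    _ = ENNReal.ofReal κ * ν (ball c η) := by
        rw [Measure.addHaar_ball_of_pos ν c hη, ENNReal.ofReal_mul hκ.le, mul_assoc]

lemma almostMaxGrowthNear_of_measure_le (hu : LipschitzWith K u) (hσ : ‖σ‖ = 1) {t μ : ℝ}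
    (ht : 0 ≤ t) (hμ : 0 ≤ μ)
    (hgood : ENNReal.ofReal (1 - μ) * ν (ball 0 1) ≤ ν {x ∈ ball (0 : E) 1 |
      x + t • σ ∈ ball 0 1 ∧ (K - μ) * t ≤ u (x + t • σ) - u x})
    {m : ℕ} {κ η : ℝ} (hη : 0 < η) (hsmall : m * t * ((1 + 2 * K) * μ) < κ * η ^ finrank ℝ E)
    {c : E} (hc : ‖c‖ + η + m * t < 1) : AlmostMaxGrowthNear u K σ (m * t) κ η c := by
  set H : E → ℝ≥0∞ := (ball (0 : E) 1).indicator fun x => ENNReal.ofReal (growthDefect u K σ t x)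
  have hH : Measurable H := (ENNReal.measurable_ofReal.comp
    (continuous_growthDefect hu t).measurable).indicator measurableSet_ball
  have hint : (m : ℝ≥0∞) * ∫⁻ x, H x ∂ν < ENNReal.ofReal κ * ν (ball c η) := by
    rw [lintegral_indicator measurableSet_ball]
    exact natCast_mul_setLIntegral_growthDefect_lt hu hσ ht hμ hgood hη hsmall c
  obtain ⟨y, hy, hsum⟩ := exists_mem_sum_comp_add_lt hH.aemeasurable
    (fun j => ((j : ℝ) * t) • σ) m hint
  refine ⟨y, mem_ball_iff_norm.mp hy, ?_⟩
  have hmem : ∀ j < m, y + ((j : ℝ) * t) • σ ∈ ball (0 : E) 1 := fun j hj => by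
    have hjm : (j : ℝ) * t ≤ m * t := by gcongr
    have hyc : ‖y‖ < ‖c‖ + η := by
      linarith [norm_le_norm_add_norm_sub' y c, mem_ball_iff_norm.mp hy]
    rw [mem_ball_zero_iff]
    calc ‖y + ((j : ℝ) * t) • σ‖ ≤ ‖y‖ + (j : ℝ) * t := by
          refine (norm_add_le _ _).trans_eq ?_
          rw [norm_smul, hσ, mul_one, Real.norm_of_nonneg (by positivity)]
      _ < 1 := by linarith
  rw [Finset.sum_congr rfl fun j hj => indicator_of_mem (hmem j (Finset.mem_range.mp hj)) _,
    ← ENNReal.ofReal_sum_of_nonneg fun j _ => growthDefect_nonneg hu hσ ht _,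
    ENNReal.ofReal_lt_ofReal_iff_of_nonneg
      (Finset.sum_nonneg fun j _ => growthDefect_nonneg hu hσ ht _),
    sum_range_growthDefect] at hsum
  linarith

lemma exists_forall_almostMaxGrowthNear (hu : LipschitzWith K u) (hσ : ‖σ‖ = 1) {t : ℕ → ℝ}
    (ht : ∀ k, 0 < t k) (htlim : Tendsto t atTop (𝓝 0)) {μ : ℝ} (hμ : 0 ≤ μ)
    (hgood : ∀ k, ENNReal.ofReal (1 - μ) * ν (ball 0 1) ≤ ν {x ∈ ball (0 : E) 1 |
      x + t k • σ ∈ ball 0 1 ∧ (K - μ) * t k ≤ u (x + t k • σ) - u x})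
    {L κ η : ℝ} (hL : 0 < L) (hη : 0 < η)
    (hsmall : 2 * L * ((1 + 2 * K) * μ) < κ * η ^ finrank ℝ E) :
    ∃ Λ, L ≤ Λ ∧ ∀ c : E, ‖c‖ + η + 2 * L < 1 → AlmostMaxGrowthNear u K σ Λ κ η c := by
  obtain ⟨k, hk⟩ : ∃ k, t k < L := (htlim.eventually (gt_mem_nhds hL)).exists
  set m := ⌈L / t k⌉₊
  have hm : L ≤ m * t k := (div_le_iff₀ (ht k)).mp (Nat.le_ceil _)
  have hm' : m * t k ≤ 2 * L :=
    calc m * t k ≤ (L / t k + 1) * t k := mul_le_mul_of_nonneg_right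
          (Nat.ceil_lt_add_one (div_pos hL (ht k)).le).le (ht k).le
      _ = L + t k := by field_simp [(ht k).ne']
      _ ≤ 2 * L := by linarith
  refine ⟨m * t k, hm, fun c hc => almostMaxGrowthNear_of_measure_le hu hσ (ht k).le hμ (hgood k) hη
    ((mul_le_mul_of_nonneg_right hm' (mul_nonneg (by positivity) hμ)).trans_lt hsmall)
    (by linarith)⟩

end Measure

lemma exists_error_budget {K ε : ℝ} (hK : 0 < K) (hε : 0 < ε) :
    ∃ L η κ : ℝ, ∃ N : ℕ, 0 < L ∧ 0 < η ∧ 0 < κ ∧ 2 * L + 2 * η ≤ 1 ∧ 4 ≤ N * L ∧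
      N * (κ + 2 * K * η) + K / (N * L) + 2 * K * (2 * L + 2 * η) ≤ ε := by
  -- each of `N κ`, `2 K η (N + 2)`, `K / (N L)` and `4 K L` is at most `ε / 4`
  set L := min (ε / (16 * K)) (1 / 8)
  have hL : 0 < L := lt_min (by positivity) (by norm_num)
  set N := ⌈(4 + 4 * K / ε) / L⌉₊
  have hNL : 4 + 4 * K / ε ≤ N * L := (div_le_iff₀ hL).mp (Nat.le_ceil _)
  have hN : (1 : ℝ) ≤ N := Nat.one_le_cast.mpr (Nat.ceil_pos.mpr (by positivity))
  set η := min (1 / 8) (ε / (24 * K * N))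
  have hKL : K * L ≤ ε / 16 := by
    rw [← le_div_iff₀' hK, div_div]; exact min_le_left _ _
  have hKη : N * (K * η) ≤ ε / 24 :=
    calc N * (K * η) ≤ N * (K * (ε / (24 * K * N))) := by gcongr; exact min_le_right _ _
      _ = ε / 24 := by field_simp
  have hKNL : K / (N * L) ≤ ε / 4 := by
    have : 4 * K / ε ≤ N * L := by linarith
    rw [div_le_iff₀ hε] at this
    rw [div_le_iff₀ (by positivity)]
    linarith
  have hNκ : (N : ℝ) * (ε / (4 * N)) = ε / 4 := by field_simp
  have hη : η ≤ 1 / 8 := min_le_left _ _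
  have hL8 : L ≤ 1 / 8 := min_le_right _ _
  refine ⟨L, η, ε / (4 * N), N, hL, lt_min (by norm_num) (by positivity), by positivity,
    by linarith, by linarith [(by positivity : 0 ≤ 4 * K / ε)], ?_⟩
  nlinarith [le_mul_of_one_le_left (by positivity : 0 ≤ K * η) hN]

theorem almost_affine_of_near_maximal_growth_general
    (n : ℕ) (M : ℝ) (hM : 0 < M) (ε : ℝ) (hε : 0 < ε) :
    ∃ μ : ℝ, μ ∈ Set.Ioo 0 M ∧
      ∀ σ : EuclideanSpace ℝ (Fin n), ‖σ‖ = 1 →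
      ∀ u : EuclideanSpace ℝ (Fin n) → ℝ,
        (∀ x ∈ Metric.ball (0 : EuclideanSpace ℝ (Fin n)) 1,
          ∀ y ∈ Metric.ball (0 : EuclideanSpace ℝ (Fin n)) 1,
            |u x - u y| ≤ M * ‖x - y‖) →
      ∀ t : ℕ → ℝ, (∀ k, 0 < t k) → StrictAnti t →
        Filter.Tendsto t Filter.atTop (nhds 0) →
        (∀ k, ENNReal.ofReal (1 - μ) *
            volume (Metric.ball (0 : EuclideanSpace ℝ (Fin n)) 1) ≤
          volume {x ∈ Metric.ball (0 : EuclideanSpace ℝ (Fin n)) 1 |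
            x + t k • σ ∈ Metric.ball (0 : EuclideanSpace ℝ (Fin n)) 1 ∧
              (M - μ) * t k ≤ u (x + t k • σ) - u x}) →
        ∀ x ∈ Metric.ball (0 : EuclideanSpace ℝ (Fin n)) 1,
          |u x - u 0 - M * (inner ℝ σ x : ℝ)| ≤ ε := by
  obtain ⟨L, η, κ, N, hL, hη, hκ, hLη, hNL, hbudget⟩ := exists_error_budget hM hε
  set μ := min (M / 2) (κ * η ^ n / (4 * L * (1 + 2 * M)))
  have hμ : 0 < μ := lt_min (by positivity) (by positivity)
  refine ⟨μ, ⟨hμ, (min_le_left _ _).trans_lt (half_lt_self hM)⟩,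
    fun σ hσ u hLip t ht _ htlim hgood x hx => ?_⟩
  obtain ⟨v, hv, huv⟩ := (LipschitzOnWith.of_dist_le_mul fun x hx y hy => by
    rw [Real.dist_eq, dist_eq_norm]; exact hLip x hx y hy :
      LipschitzOnWith ⟨M, hM.le⟩ u (ball 0 1)).extend_real
  have hgood' : ∀ k, ENNReal.ofReal (1 - μ) * volume (ball (0 : EuclideanSpace ℝ (Fin n)) 1) ≤
      volume {x ∈ ball (0 : EuclideanSpace ℝ (Fin n)) 1 |
        x + t k • σ ∈ ball 0 1 ∧ (M - μ) * t k ≤ v (x + t k • σ) - v x} := fun k =>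
    (hgood k).trans_eq <| congrArg volume <| Set.ext fun x =>
      and_congr_right fun hx => and_congr_right fun hxt => by rw [huv hx, huv hxt]
  have hsmall : 2 * L * ((1 + 2 * M) * μ) < κ * η ^ finrank ℝ (EuclideanSpace ℝ (Fin n)) := by
    rw [finrank_euclideanSpace_fin, ← mul_assoc]
    calc 2 * L * (1 + 2 * M) * μ ≤ 2 * L * (1 + 2 * M) * (κ * η ^ n / (4 * L * (1 + 2 * M))) := by
          gcongr; exact min_le_right _ _
      _ = κ * η ^ n / 2 := by field_simp; ring
      _ < κ * η ^ n := half_lt_self (by positivity)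
  obtain ⟨Λ, hLΛ, hgrowth⟩ :=
    exists_forall_almostMaxGrowthNear hv hσ ht htlim hμ.le hgood' hL hη hsmall
  have := abs_sub_sub_inner_le_of_forall_almostMaxGrowthNear hv hσ hL hLΛ hLη hgrowth hη hNL
    (mem_ball_zero_iff.mp hx).le
  rw [← huv hx, ← huv (mem_ball_self one_pos)] at this
  exact this.trans hbudget

/-- **Near-maximal growth at many points forces closeness to an affine map.**
Let `n ≥ 1` and `M > 0`. For every `ε > 0` there is `μ = μ(n,ε,M) ∈ (0,M)` such that the
following holds: for every unit vector `σ ∈ ∂B₁ ⊆ ℝⁿ` and every `M`-Lipschitz function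
`u : B₁ → ℝ` for which there is a sequence `t k ↘ 0` with
`|{x ∈ B₁ : x + t k • σ ∈ B₁ and u(x + t k σ) - u(x) ≥ (M - μ) t k}| ≥ (1 - μ)|B₁|`
for every `k`, one has `|u(x) - u(0) - M σ·x| ≤ ε` for every `x ∈ B₁`. -/
theorem almost_affine_of_near_maximal_growth
    (n : ℕ) (hn : 1 ≤ n) (M : ℝ) (hM : 0 < M) (ε : ℝ) (hε : 0 < ε) :
    ∃ μ : ℝ, μ ∈ Set.Ioo 0 M ∧
      ∀ σ : EuclideanSpace ℝ (Fin n), ‖σ‖ = 1 →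
      ∀ u : EuclideanSpace ℝ (Fin n) → ℝ,
        (∀ x ∈ Metric.ball (0 : EuclideanSpace ℝ (Fin n)) 1,
          ∀ y ∈ Metric.ball (0 : EuclideanSpace ℝ (Fin n)) 1,
            |u x - u y| ≤ M * ‖x - y‖) →
      ∀ t : ℕ → ℝ, (∀ k, 0 < t k) → StrictAnti t →
        Filter.Tendsto t Filter.atTop (nhds 0) →
        (∀ k, ENNReal.ofReal (1 - μ) *
            volume (Metric.ball (0 : EuclideanSpace ℝ (Fin n)) 1) ≤
          volume {x ∈ Metric.ball (0 : EuclideanSpace ℝ (Fin n)) 1 |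
            x + t k • σ ∈ Metric.ball (0 : EuclideanSpace ℝ (Fin n)) 1 ∧
              (M - μ) * t k ≤ u (x + t k • σ) - u x}) →
        ∀ x ∈ Metric.ball (0 : EuclideanSpace ℝ (Fin n)) 1,
          |u x - u 0 - M * (inner ℝ σ x : ℝ)| ≤ ε :=
  almost_affine_of_near_maximal_growth_general n M hM ε hε
end

section
/- Let n ≥ 1, α ∈ (0,1), C > 0, and let u : ℝⁿ → ℝ be a differentiable function such that there exists a sequence r_k ↗ ∞ with r_k^α [∇u]_{C^α(B_{r_k/2})} ≤ C for every k, where [∇u]_{C^α(B_R)} := sup_{x≠y ∈ B_R} |∇u(x) − ∇u(y)|/|x−y|^α. Then ∇u is constant on ℝⁿ, i.e., u is an affine function. -/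
/-! Fix `x ≠ y`. Once `r k > 2 max ‖x‖ ‖y‖`, both points lie in `B_{r k / 2}`, so
`‖∇u x - ∇u y‖ ≤ C ‖x - y‖ ^ α / r k ^ α`, which tends to `0`. Hence `∇u` is constant, and a
function with constant derivative on the whole space is affine. -/

open Filter Metric

theorem eq_of_rpow_mul_norm_sub_le_on_balls {ι E F : Type*} [SeminormedAddCommGroup E]
    [NormedAddCommGroup F] {l : Filter ι} [l.NeBot] {f : E → F} {α C : ℝ} (hα : 0 < α)
    {r : ι → ℝ} (hr : Tendsto r l atTop)
    (hf : ∀ k, ∀ x ∈ ball (0 : E) (r k / 2), ∀ y ∈ ball (0 : E) (r k / 2),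
      r k ^ α * ‖f x - f y‖ ≤ C * ‖x - y‖ ^ α)
    (x y : E) : f x = f y := by
  by_contra hne
  have hpos : 0 < ‖f x - f y‖ := norm_pos_iff.mpr (sub_ne_zero.mpr hne)
  have hlarge : ∀ᶠ k in l, C * ‖x - y‖ ^ α < r k ^ α * ‖f x - f y‖ :=
    (((tendsto_rpow_atTop hα).comp hr).atTop_mul_const hpos).eventually_gt_atTop _
  have mem_ball_eventually (z : E) : ∀ᶠ k in l, z ∈ ball (0 : E) (r k / 2) :=
    (hr.eventually_gt_atTop (2 * ‖z‖)).mono fun k hk => by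
      rw [mem_ball_zero_iff]
      linarith
  obtain ⟨k, hk, hx, hy⟩ :=
    (hlarge.and ((mem_ball_eventually x).and (mem_ball_eventually y))).exists
  exact (hf k x hx y hy).not_gt hk

theorem eq_inner_add_of_gradient_eq {F : Type*} [NormedAddCommGroup F] [InnerProductSpace ℝ F]
    [CompleteSpace F] {u : F → ℝ} (hu : Differentiable ℝ u)
    (hgrad : ∀ x y, gradient u x = gradient u y) (x : F) :
    u x = inner ℝ (gradient u 0) x + u 0 := by
  have haffine (z : F) :
      HasFDerivAt (fun w => inner ℝ (gradient u 0) w + u 0) (innerSL ℝ (gradient u 0)) z :=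
    (innerSL ℝ (gradient u 0)).hasFDerivAt.add_const (u 0)
  refine congrFun (eq_of_fderiv_eq hu (fun z => (haffine z).differentiableAt)
    (fun z => ?_) 0 (by simp)) x
  rw [(haffine z).fderiv, ← toDual_gradient, hgrad z 0]
  ext w
  simp

theorem affine_of_decaying_holder_seminorm_general
    (n : ℕ) (α : ℝ) (hα : α ∈ Set.Ioo (0 : ℝ) 1) (C : ℝ)
    (u : EuclideanSpace ℝ (Fin n) → ℝ) (hdiff : Differentiable ℝ u)
    (r : ℕ → ℝ)
    (hrtop : Filter.Tendsto r Filter.atTop Filter.atTop)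
    (hhold : ∀ k, ∀ x ∈ Metric.ball (0 : EuclideanSpace ℝ (Fin n)) (r k / 2),
      ∀ y ∈ Metric.ball (0 : EuclideanSpace ℝ (Fin n)) (r k / 2),
        r k ^ α * ‖gradient u x - gradient u y‖ ≤ C * ‖x - y‖ ^ α) :
    (∀ x y : EuclideanSpace ℝ (Fin n), gradient u x = gradient u y) ∧
      ∃ (a : EuclideanSpace ℝ (Fin n)) (b : ℝ), ∀ x, u x = (inner ℝ a x : ℝ) + b := by
  have hgrad := eq_of_rpow_mul_norm_sub_le_on_balls hα.1 hrtop hhold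
  exact ⟨hgrad, _, _, eq_inner_add_of_gradient_eq hdiff hgrad⟩

/-- **Decaying Hölder seminorm of the gradient at large scales forces affineness.**
Let `n ≥ 1`, `α ∈ (0,1)`, `C > 0`, and let `u : ℝⁿ → ℝ` be differentiable. Suppose there is
a sequence `r k ↗ ∞` of positive numbers with `r k ^ α [∇u]_{C^α(B_{r k / 2})} ≤ C` for
every `k` (equivalently, `r k ^ α * |∇u(x) - ∇u(y)| ≤ C * |x - y| ^ α` for all
`x, y ∈ B_{r k / 2}`). Then `∇u` is constant on `ℝⁿ`, i.e. `u` is an affine function. -/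
theorem affine_of_decaying_holder_seminorm
    (n : ℕ) (hn : 1 ≤ n) (α : ℝ) (hα : α ∈ Set.Ioo (0 : ℝ) 1) (C : ℝ) (hC : 0 < C)
    (u : EuclideanSpace ℝ (Fin n) → ℝ) (hdiff : Differentiable ℝ u)
    (r : ℕ → ℝ) (hrpos : ∀ k, 0 < r k) (hrmono : StrictMono r)
    (hrtop : Filter.Tendsto r Filter.atTop Filter.atTop)
    (hhold : ∀ k, ∀ x ∈ Metric.ball (0 : EuclideanSpace ℝ (Fin n)) (r k / 2),
      ∀ y ∈ Metric.ball (0 : EuclideanSpace ℝ (Fin n)) (r k / 2),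
        r k ^ α * ‖gradient u x - gradient u y‖ ≤ C * ‖x - y‖ ^ α) :
    (∀ x y : EuclideanSpace ℝ (Fin n), gradient u x = gradient u y) ∧
      ∃ (a : EuclideanSpace ℝ (Fin n)) (b : ℝ), ∀ x, u x = (inner ℝ a x : ℝ) + b :=
  affine_of_decaying_holder_seminorm_general n α hα C u hdiff r hrtop hhold
end

section
/- Let n ≥ 1, M > 0, and let u : ℝⁿ → ℝ be an M-Lipschitz function with u(0) = 0 whose graph E₀ = {(x,τ) : τ < u(x)} is a cone (tE₀ = E₀ for all t > 0, equivalently u is positively 1-homogeneous). Suppose there exist θ > 0, a function w : ℝⁿ → [0,1] with w = 1 on the annulus B_{3/5}∖B_{2/5}, and for each unit vector σ ∈ ∂B₁ a number t_σ > 0, such that u(x + tσ) ≤ u(x) + M t − θ t w(x) for all x ∈ B₁, t ∈ (0, t_σ), and σ ∈ ∂B₁. Then u is (M − θ)-Lipschitz on ℝⁿ. -/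
/-- **Improved Lipschitz bound for a homogeneous graph from sliding estimates.**
Let `n ≥ 1`, `M > 0`, and let `u : ℝⁿ → ℝ` be `M`-Lipschitz with `u(0) = 0` and positively
`1`-homogeneous (so that its hypograph is a cone). Suppose there exist `θ > 0`, a function
`w : ℝⁿ → [0,1]` with `w = 1` on the annulus `B_{3/5} ∖ B_{2/5}`, and, for each unit vector
`σ`, a number `t_σ > 0` such that `u(x + tσ) ≤ u(x) + M t - θ t w(x)` for all `x ∈ B₁` and
`t ∈ (0, t_σ)`. Then `u` is `(M - θ)`-Lipschitz on `ℝⁿ`. -/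
theorem improved_lipschitz_of_sliding_estimate
    (n : ℕ) (hn : 1 ≤ n) (M : ℝ) (hM : 0 < M)
    (u : EuclideanSpace ℝ (Fin n) → ℝ)
    (hLip : ∀ x y : EuclideanSpace ℝ (Fin n), |u x - u y| ≤ M * ‖x - y‖)
    (hu0 : u 0 = 0)
    (hhom : ∀ l : ℝ, 0 < l → ∀ x : EuclideanSpace ℝ (Fin n), u (l • x) = l * u x)
    (θ : ℝ) (hθ : 0 < θ)
    (w : EuclideanSpace ℝ (Fin n) → ℝ) (hw : ∀ x, w x ∈ Set.Icc (0 : ℝ) 1)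
    (hw1 : ∀ x ∈ Metric.ball (0 : EuclideanSpace ℝ (Fin n)) (3 / 5) \
        Metric.ball (0 : EuclideanSpace ℝ (Fin n)) (2 / 5), w x = 1)
    (hslide : ∀ σ : EuclideanSpace ℝ (Fin n), ‖σ‖ = 1 →
      ∃ tσ : ℝ, 0 < tσ ∧
        ∀ x ∈ Metric.ball (0 : EuclideanSpace ℝ (Fin n)) 1,
          ∀ t : ℝ, 0 < t → t < tσ →
            u (x + t • σ) ≤ u x + M * t - θ * t * w x) :
    ∀ x y : EuclideanSpace ℝ (Fin n), |u x - u y| ≤ (M - θ) * ‖x - y‖ := by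
  classical
  -- homogeneity for nonnegative scalars
  have hray : ∀ (v : EuclideanSpace ℝ (Fin n)) (r : ℝ), 0 ≤ r → u (r • v) = r * u v := by
    intro v r hr
    rcases eq_or_lt_of_le hr with h | h
    · simp [← h, hu0]
    · exact hhom r h v
  -- rescaled sliding estimate
  have star : ∀ σ : EuclideanSpace ℝ (Fin n), ‖σ‖ = 1 →
      ∃ c : ℝ, 0 < c ∧ ∀ z : EuclideanSpace ℝ (Fin n), z ≠ 0 → ∀ s : ℝ, 0 < s →
        s < 2 * ‖z‖ * c → u (z + s • σ) ≤ u z + (M - θ) * s := by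
    intro σ hσ
    obtain ⟨c, hc, hc'⟩ := hslide σ hσ
    refine ⟨c, hc, fun z hz s hs hsc => ?_⟩
    have hz' : 0 < ‖z‖ := norm_pos_iff.mpr hz
    set l : ℝ := 2 * ‖z‖ with hl_def
    have hl : 0 < l := by positivity
    have hxnorm : ‖l⁻¹ • z‖ = 1 / 2 := by
      rw [norm_smul, Real.norm_eq_abs, abs_inv, abs_of_pos hl, hl_def]
      field_simp
    have hball : l⁻¹ • z ∈ Metric.ball (0 : EuclideanSpace ℝ (Fin n)) 1 := by
      rw [mem_ball_zero_iff, hxnorm]; norm_num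
    have hwx : w (l⁻¹ • z) = 1 := by
      refine hw1 _ ⟨?_, ?_⟩
      · rw [mem_ball_zero_iff, hxnorm]; norm_num
      · intro hmem
        rw [mem_ball_zero_iff, hxnorm] at hmem
        norm_num at hmem
    have hsl : 0 < s / l := div_pos hs hl
    have hsl' : s / l < c := by
      rw [div_lt_iff₀ hl]
      calc s < 2 * ‖z‖ * c := hsc
        _ = c * l := by rw [hl_def]; ring
    have key := hc' (l⁻¹ • z) hball (s / l) hsl hsl'
    rw [hwx] at key
    have hls : l * (s / l) = s := by field_simp
    have hrec : l • (l⁻¹ • z + (s / l) • σ) = z + s • σ := by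
      rw [smul_add, smul_smul, smul_smul, mul_inv_cancel₀ hl.ne', one_smul, hls]
    have h1 : u (z + s • σ) = l * u (l⁻¹ • z + (s / l) • σ) := by
      rw [← hrec, hhom l hl]
    have h2 : u z = l * u (l⁻¹ • z) := by
      rw [← hhom l hl, smul_inv_smul₀ hl.ne']
    rw [h1, h2]
    have hmul := mul_le_mul_of_nonneg_left key hl.le
    calc l * u (l⁻¹ • z + (s / l) • σ)
        ≤ l * (u (l⁻¹ • z) + M * (s / l) - θ * (s / l) * 1) := hmul
      _ = l * u (l⁻¹ • z) + M * (l * (s / l)) - θ * (l * (s / l)) := by ring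
      _ = l * u (l⁻¹ • z) + (M - θ) * s := by rw [hls]; ring
  -- directional estimate
  have dir : ∀ σ : EuclideanSpace ℝ (Fin n), ‖σ‖ = 1 →
      ∀ (y : EuclideanSpace ℝ (Fin n)) (t : ℝ), 0 < t →
        u (y + t • σ) ≤ u y + (M - θ) * t := by
    intro σ hσ
    obtain ⟨c, hc, hstar⟩ := star σ hσ
    have hσ0 : σ ≠ 0 := by
      intro h; rw [h, norm_zero] at hσ; norm_num at hσ
    have L1 : u σ ≤ M - θ := by
      have h1 : u (σ + c • σ) ≤ u σ + (M - θ) * c :=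
        hstar σ hσ0 c hc (by rw [hσ]; linarith)
      have h2 : σ + c • σ = (1 + c) • σ := by rw [add_smul, one_smul]
      rw [h2, hray σ (1 + c) (by linarith)] at h1
      nlinarith
    have L2 : -u (-σ) ≤ M - θ := by
      have hmin : 0 < min c 1 := lt_min hc one_pos
      set s : ℝ := min c 1 / 2 with hs_def
      have hs0 : 0 < s := by positivity
      have hs1 : s < 1 := by
        have := min_le_right c 1; rw [hs_def]; linarith
      have hsc : s < 2 * ‖(-σ : EuclideanSpace ℝ (Fin n))‖ * c := by
        rw [norm_neg, hσ]
        have := min_le_left c 1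
        rw [hs_def]; linarith
      have h1 := hstar (-σ) (neg_ne_zero.mpr hσ0) s hs0 hsc
      have h2 : -σ + s • σ = (1 - s) • (-σ) := by
        rw [smul_neg, sub_smul, one_smul, neg_sub]
        abel
      rw [h2, hray (-σ) (1 - s) (by linarith)] at h1
      nlinarith
    intro y t ht
    by_cases hB : ∃ s ∈ Set.Icc (0 : ℝ) t, y + s • σ = 0
    · obtain ⟨s₀, ⟨hs₀0, hs₀t⟩, hzero⟩ := hB
      have hy : y = s₀ • (-σ) := by
        rw [smul_neg]
        exact eq_neg_of_add_eq_zero_left hzero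
      have hyt : y + t • σ = (t - s₀) • σ := by
        rw [hy, smul_neg, sub_smul]; abel
      rw [hyt, hy, hray σ (t - s₀) (by linarith), hray (-σ) s₀ hs₀0]
      nlinarith [mul_le_mul_of_nonneg_left L1 (sub_nonneg.mpr hs₀t),
        mul_le_mul_of_nonneg_left L2 hs₀0]
    · push_neg at hB
      have hcontn : ContinuousOn (fun s : ℝ => ‖y + s • σ‖) (Set.Icc 0 t) := by
        fun_prop
      obtain ⟨sm, hsmmem, hsmmin⟩ := (isCompact_Icc).exists_isMinOn
        ⟨0, Set.left_mem_Icc.mpr ht.le⟩ hcontn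
      set δ : ℝ := ‖y + sm • σ‖ with hδ_def
      have hδ : 0 < δ := norm_pos_iff.mpr (hB sm hsmmem)
      obtain ⟨N, hN⟩ := exists_nat_gt (t / (2 * δ * c))
      have htdc : 0 < t / (2 * δ * c) := by positivity
      have hN0 : 0 < (N : ℝ) := lt_trans htdc hN
      set h : ℝ := t / N with hh_def
      have hh : 0 < h := div_pos ht hN0
      have hhsmall : h < 2 * δ * c := by
        rw [hh_def, div_lt_iff₀ hN0]
        have := (div_lt_iff₀ (by positivity : (0 : ℝ) < 2 * δ * c)).mp hN
        linarith
      have hNh : (N : ℝ) * h = t := by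
        rw [hh_def]; field_simp
      have main : ∀ k : ℕ, k ≤ N → u (y + ((k : ℝ) * h) • σ) ≤ u y + (M - θ) * ((k : ℝ) * h) := by
        intro k
        induction k with
        | zero => intro _; simp
        | succ k ih =>
          intro hk
          have hk' : k ≤ N := Nat.le_of_succ_le hk
          have hkr : (k : ℝ) ≤ N := Nat.cast_le.mpr hk'
          have hkh0 : (0 : ℝ) ≤ (k : ℝ) * h := by positivity
          have hkht : (k : ℝ) * h ≤ t := by
            rw [← hNh]
            exact mul_le_mul_of_nonneg_right hkr hh.le
          have hδk : δ ≤ ‖y + ((k : ℝ) * h) • σ‖ := hsmmin ⟨hkh0, hkht⟩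
          have hzk : y + ((k : ℝ) * h) • σ ≠ 0 :=
            norm_pos_iff.mp (lt_of_lt_of_le hδ hδk)
          have hstep : h < 2 * ‖y + ((k : ℝ) * h) • σ‖ * c := by
            calc h < 2 * δ * c := hhsmall
              _ ≤ 2 * ‖y + ((k : ℝ) * h) • σ‖ * c := by nlinarith
          have step := hstar _ hzk h hh hstep
          have heq : y + ((k : ℝ) * h) • σ + h • σ = y + (((k : ℕ) + 1 : ℝ) * h) • σ := by
            rw [add_assoc, ← add_smul]
            congr 2
            ring
          rw [heq] at step
          have hcast : ((k + 1 : ℕ) : ℝ) = (k : ℝ) + 1 := by push_cast; ring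
          rw [hcast]
          calc u (y + (((k : ℝ) + 1) * h) • σ)
              ≤ u (y + ((k : ℝ) * h) • σ) + (M - θ) * h := step
            _ ≤ u y + (M - θ) * ((k : ℝ) * h) + (M - θ) * h := by linarith [ih hk']
            _ = u y + (M - θ) * (((k : ℝ) + 1) * h) := by ring
      have := main N le_rfl
      rw [hNh] at this
      exact this
  -- conclusion
  intro x y
  rcases eq_or_ne x y with rfl | hxy
  · simp
  have ht : 0 < ‖x - y‖ := by rwa [norm_pos_iff, sub_ne_zero]
  set t : ℝ := ‖x - y‖ with ht_def
  have htne : t ≠ 0 := ht.ne'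
  have hσ1 : ‖t⁻¹ • (x - y)‖ = 1 := by
    rw [norm_smul, Real.norm_eq_abs, abs_inv, abs_of_pos ht, ← ht_def]
    field_simp
  have hσ2 : ‖t⁻¹ • (y - x)‖ = 1 := by
    rw [norm_smul, Real.norm_eq_abs, abs_inv, abs_of_pos ht, norm_sub_rev, ← ht_def]
    field_simp
  have h1 : u x ≤ u y + (M - θ) * t := by
    have := dir _ hσ1 y t ht
    rw [smul_inv_smul₀ htne] at this
    have heq : y + (x - y) = x := by abel
    rwa [heq] at this
  have h2 : u y ≤ u x + (M - θ) * t := by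
    have := dir _ hσ2 x t ht
    rw [smul_inv_smul₀ htne] at this
    have heq : x + (y - x) = y := by abel
    rwa [heq] at this
  rw [abs_sub_le_iff]
  constructor <;> linarith
end
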